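/- With the definitions below, the privacy vector a* = (α*_1,…,α*_M) satisfies: (i) f(a*) = M; (ii) α̃(a*) := max_m α*_m = r̃; and consequently (iii) r(a*) = U. -/

import Mathlib

open Finset Real

/-- `f(a) = max_m Σ_{m'} (c_m √(R² + α_{m'}²σ²)) / (c_{m'} √(R² + α_m²σ²))`. -/
noncomputable def fval (M : ℕ) (R σ : ℝ) (c a : Fin M → ℝ) : ℝ :=
  ⨆ m, ∑ m', (c m * Real.sqrt (R ^ 2 + (a m') ^ 2 * σ ^ 2))
    / (c m' * Real.sqrt (R ^ 2 + (a m) ^ 2 * σ ^ 2))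

/-- The asymptotic regret-bound constant
`r(a) = 2LK (d(R² + α̃(a)²σ²))^{1/3} (2S√M/λ̌ + √((M−1) + (2 f(a) − 1)²))`. -/
noncomputable def rval (M d : ℕ) (L K S lam R σ : ℝ) (c a : Fin M → ℝ) : ℝ :=
  2 * L * K * (d * (R ^ 2 + (⨆ m, a m) ^ 2 * σ ^ 2)) ^ ((1 : ℝ) / 3)
    * (2 * S * Real.sqrt M / lam
        + Real.sqrt ((M - 1) + (2 * fval M R σ c a - 1) ^ 2))

/-- `r̃ = (1/σ) √( U³ / (8L³K³ d M^{3/2} (2S/λ̌ + √(4M−3))³) − R² )`. -/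
noncomputable def rtil (M d : ℕ) (L K S lam σ U R : ℝ) : ℝ :=
  (1 / σ) * Real.sqrt (U ^ 3
    / (8 * L ^ 3 * K ^ 3 * d * (M : ℝ) ^ ((3 : ℝ) / 2)
        * (2 * S / lam + Real.sqrt (4 * M - 3)) ^ 3) - R ^ 2)

/-- The unimprovable privacy vector `a*`, with
`α*_m = √( (R²/σ² + r̃²) c_m²/c̃² − R²/σ² )` where `c̃ = max_m c_m`. -/
noncomputable def astar (M d : ℕ) (L K S lam σ U R : ℝ) (c : Fin M → ℝ) :
    Fin M → ℝ := fun m =>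
  Real.sqrt ((R ^ 2 / σ ^ 2 + (rtil M d L K S lam σ U R) ^ 2)
      * (c m) ^ 2 / (⨆ m', c m') ^ 2 - R ^ 2 / σ ^ 2)

/-- The privacy vector `a*` satisfies `f(a*) = M`, `α̃(a*) = r̃` and `r(a*) = U`. -/
theorem astar_meets_budget
    (M d : ℕ) [NeZero M] (hd : 0 < d)
    (L K S σ lam U R : ℝ) (hL : 0 < L) (hK : 0 < K) (hS : 0 < S) (hσ : 0 < σ)
    (hlam : 0 < lam) (hU : 0 < U) (hR : 0 ≤ R)
    (c : Fin M → ℝ) (hc : ∀ m, 0 < c m)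
    (hrt : 0 < U ^ 3
      / (8 * L ^ 3 * K ^ 3 * d * (M : ℝ) ^ ((3 : ℝ) / 2)
          * (2 * S / lam + Real.sqrt (4 * M - 3)) ^ 3) - R ^ 2)
    (hrad : ∀ m, 0 ≤ (R ^ 2 / σ ^ 2 + (rtil M d L K S lam σ U R) ^ 2)
        * (c m) ^ 2 / (⨆ m', c m') ^ 2 - R ^ 2 / σ ^ 2) :
    fval M R σ c (astar M d L K S lam σ U R c) = M ∧
    (⨆ m, astar M d L K S lam σ U R c m) = rtil M d L K S lam σ U R ∧
    rval M d L K S lam R σ c (astar M d L K S lam σ U R c) = U := by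
  have hMpos : 0 < M := Nat.pos_of_ne_zero (NeZero.ne M)
  have : Nonempty (Fin M) := Fin.pos_iff_nonempty.mp hMpos
  have hM1 : (1:ℝ) ≤ (M:ℝ) := by exact_mod_cast hMpos
  obtain ⟨m0, hm0⟩ := Finite.exists_max c
  have hct : (⨆ m', c m') = c m0 :=
    le_antisymm (ciSup_le hm0) (le_ciSup (Finite.bddAbove_range c) m0)
  set rt := rtil M d L K S lam σ U R with hrt_def
  have hrtsq : rt ^ 2 = (U ^ 3
      / (8 * L ^ 3 * K ^ 3 * d * (M : ℝ) ^ ((3 : ℝ) / 2)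
          * (2 * S / lam + Real.sqrt (4 * M - 3)) ^ 3) - R ^ 2) / σ ^ 2 := by
    simp only [hrt_def, rtil, mul_pow, Real.sq_sqrt hrt.le, div_pow, one_pow]
    ring
  have hrtpos : 0 < rt := by
    rw [hrt_def, rtil]
    exact mul_pos (by positivity) (Real.sqrt_pos.2 hrt)
  set T := R ^ 2 / σ ^ 2 + rt ^ 2 with hTdef
  have hT : 0 < T := by positivity
  have hrad' : ∀ m, 0 ≤ T * c m ^ 2 / c m0 ^ 2 - R ^ 2 / σ ^ 2 := by
    intro m; have := hrad m; rwa [hct] at this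
  have hastar : ∀ m, astar M d L K S lam σ U R c m
      = Real.sqrt (T * c m ^ 2 / c m0 ^ 2 - R ^ 2 / σ ^ 2) := by
    intro m; simp only [astar, hct, ← hrt_def, ← hTdef]
  have key : ∀ m, Real.sqrt (R ^ 2 + (astar M d L K S lam σ U R c m) ^ 2 * σ ^ 2)
      = σ * Real.sqrt T * c m / c m0 := by
    intro m
    rw [hastar m, Real.sq_sqrt (hrad' m)]
    have h1 : R ^ 2 + (T * c m ^ 2 / c m0 ^ 2 - R ^ 2 / σ ^ 2) * σ ^ 2
        = (σ * Real.sqrt T * c m / c m0) ^ 2 := by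
      rw [div_pow, mul_pow, mul_pow, Real.sq_sqrt hT.le]
      field_simp
      ring
    rw [h1, Real.sqrt_sq
      (div_nonneg (mul_nonneg (mul_nonneg hσ.le (Real.sqrt_nonneg _)) (hc m).le) (hc m0).le)]
  -- part (i)
  have hterm : ∀ m m' : Fin M,
      (c m * (σ * Real.sqrt T * c m' / c m0)) / (c m' * (σ * Real.sqrt T * c m / c m0)) = 1 := by
    intro m m'
    have hb : c m' * (σ * Real.sqrt T * c m / c m0) ≠ 0 :=
      (mul_pos (hc m') (div_pos (mul_pos (mul_pos hσ (Real.sqrt_pos.2 hT)) (hc m)) (hc m0))).ne'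
    rw [show c m * (σ * Real.sqrt T * c m' / c m0)
        = c m' * (σ * Real.sqrt T * c m / c m0) by ring, div_self hb]
  have hf : fval M R σ c (astar M d L K S lam σ U R c) = M := by
    rw [fval]
    simp only [key, hterm, Finset.sum_const, Finset.card_univ, Fintype.card_fin,
      nsmul_eq_mul, mul_one, ciSup_const]
  -- part (ii)
  have hle : ∀ m, astar M d L K S lam σ U R c m ≤ rt := by
    intro m
    rw [hastar m]
    have hc2 : c m ^ 2 ≤ c m0 ^ 2 := pow_le_pow_left₀ (hc m).le (hm0 m) 2
    have h2 : T * c m ^ 2 / c m0 ^ 2 - R ^ 2 / σ ^ 2 ≤ rt ^ 2 := by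
      have h3 : T * c m ^ 2 / c m0 ^ 2 ≤ T := by
        rw [div_le_iff₀ (pow_pos (hc m0) 2)]
        nlinarith
      have h4 : T - R ^ 2 / σ ^ 2 = rt ^ 2 := by rw [hTdef]; ring
      linarith
    calc Real.sqrt (T * c m ^ 2 / c m0 ^ 2 - R ^ 2 / σ ^ 2)
        ≤ Real.sqrt (rt ^ 2) := Real.sqrt_le_sqrt h2
      _ = rt := Real.sqrt_sq hrtpos.le
  have heq0 : astar M d L K S lam σ U R c m0 = rt := by
    rw [hastar m0, mul_div_assoc, div_self (pow_ne_zero 2 (hc m0).ne'), mul_one,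
      show T - R ^ 2 / σ ^ 2 = rt ^ 2 by rw [hTdef]; ring, Real.sqrt_sq hrtpos.le]
  have hsup : (⨆ m, astar M d L K S lam σ U R c m) = rt :=
    le_antisymm (ciSup_le hle) (heq0 ▸ le_ciSup (Finite.bddAbove_range _) m0)
  refine ⟨hf, hsup, ?_⟩
  -- part (iii)
  have hsM : 0 < Real.sqrt M := Real.sqrt_pos.2 (by positivity)
  have hB : 0 < 2 * S / lam + Real.sqrt (4 * (M:ℝ) - 3) :=
    add_pos_of_pos_of_nonneg (by positivity) (Real.sqrt_nonneg _)
  set B := 2 * S / lam + Real.sqrt (4 * (M:ℝ) - 3) with hBdef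
  have hM32 : ((M:ℝ)) ^ ((3:ℝ)/2) = Real.sqrt (M:ℝ) ^ 3 := by
    rw [Real.sqrt_eq_rpow, ← Real.rpow_natCast ((M:ℝ) ^ ((1:ℝ)/2)) 3,
      ← Real.rpow_mul (Nat.cast_nonneg M)]
    norm_num
  set y := U / (2 * L * K * Real.sqrt M * B) with hydef
  have hy : 0 < y := by positivity
  have hRrt : R ^ 2 + rt ^ 2 * σ ^ 2
      = U ^ 3 / (8 * L ^ 3 * K ^ 3 * d * (M:ℝ) ^ ((3:ℝ)/2) * B ^ 3) := by
    rw [hrtsq, div_mul_cancel₀ _ (pow_ne_zero 2 hσ.ne')]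
    ring
  have hdy : (d:ℝ) * (R ^ 2 + rt ^ 2 * σ ^ 2) = y ^ 3 := by
    rw [hRrt, hM32, hydef]
    have hd0 : (d:ℝ) ≠ 0 := Nat.cast_ne_zero.2 hd.ne'
    field_simp
    ring
  have hcube : ((d:ℝ) * (R ^ 2 + rt ^ 2 * σ ^ 2)) ^ ((1:ℝ)/3) = y := by
    rw [hdy, ← Real.rpow_natCast y 3, ← Real.rpow_mul hy.le]
    norm_num
  have hbr : Real.sqrt (((M:ℝ) - 1) + (2 * (M:ℝ) - 1) ^ 2)
      = Real.sqrt M * Real.sqrt (4 * (M:ℝ) - 3) := by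
    rw [show ((M:ℝ) - 1) + (2 * (M:ℝ) - 1) ^ 2 = (M:ℝ) * (4 * (M:ℝ) - 3) by ring,
      Real.sqrt_mul (Nat.cast_nonneg M)]
  have hB0 : B ≠ 0 := hB.ne'
  rw [rval, hsup, hf, hcube, hbr,
    show 2 * S * Real.sqrt (M:ℝ) / lam + Real.sqrt (M:ℝ) * Real.sqrt (4 * (M:ℝ) - 3)
      = Real.sqrt (M:ℝ) * B by rw [hBdef]; ring,
    hydef]
  field_simp
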